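/- On the null-shell chart U of the Schwarzschild exterior of mass M, the following two Lie bracket identities hold at every point of U: [𝕏_g, ∂_{r*}] = ( ((r−3M)p_t)/(r²Ω²) + ((r−3M)p_{r*}²)/(r²Ω²p_t) )·∂_t − 2((r−3M)/(r²Ω²))·p_{r*}·∂_{r*} + Ω²·((r−6M)/r⁵)·ℓ²·∂_{p_{r*}} + (2Ω²/r)·𝕏_g, and [𝕏_g, ∂_{p_{r*}}] = (p_{r*}/(Ω²p_t))·∂_t − (1/Ω²)·∂_{r*}. -/

import Mathlib

open Real

noncomputable section

namespace SchwVlasov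

/-- Points of the null-shell chart: coordinates `(t, r, θ, φ, p_{r*}, p_θ, p_φ)`. -/
abbrev Pt : Type := Fin 7 → ℝ

/-- The null-shell chart `U`: `r > 2M`, `θ ∈ (0, π)`, `p_θ² + p_φ²/sin²θ > 0`. -/
def U (M : ℝ) : Set Pt :=
  {x | 2 * M < x 1 ∧ 0 < x 2 ∧ x 2 < Real.pi ∧
    0 < (x 5) ^ 2 + (x 6) ^ 2 / (Real.sin (x 2)) ^ 2}

/-- The Lie bracket `[V, W](x) = DW(x)·V(x) − DV(x)·W(x)` of vector fields on `ℝ⁷`. -/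
def lieBracket (V W : Pt → Pt) (x : Pt) : Pt :=
  fderiv ℝ W x (V x) - fderiv ℝ V x (W x)

/-- `Ω²(r) = 1 − 2M/r`. -/
def Om2 (M : ℝ) (x : Pt) : ℝ := 1 - 2 * M / x 1

/-- `Ω(r) = (1 − 2M/r)^{1/2}`. -/
def Om (M : ℝ) (x : Pt) : ℝ := Real.sqrt (Om2 M x)

/-- The total angular momentum `ℓ = (p_θ² + p_φ²/sin²θ)^{1/2}`. -/
def ell (x : Pt) : ℝ := Real.sqrt ((x 5) ^ 2 + (x 6) ^ 2 / (Real.sin (x 2)) ^ 2)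

/-- `p_t = −(p_{r*}² + Ω²ℓ²/r²)^{1/2}`. -/
def ptm (M : ℝ) (x : Pt) : ℝ := -Real.sqrt ((x 4) ^ 2 + Om2 M x * (ell x) ^ 2 / (x 1) ^ 2)

/-- The coordinate vector field `∂_t`. -/
def dt : Pt := ![1, 0, 0, 0, 0, 0, 0]
/-- The coordinate vector field `∂_r`. -/
def dr : Pt := ![0, 1, 0, 0, 0, 0, 0]
/-- The coordinate vector field `∂_θ`. -/
def dth : Pt := ![0, 0, 1, 0, 0, 0, 0]
/-- The coordinate vector field `∂_φ`. -/
def dph : Pt := ![0, 0, 0, 1, 0, 0, 0]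
/-- The coordinate vector field `∂_{p_{r*}}`. -/
def dpr : Pt := ![0, 0, 0, 0, 1, 0, 0]
/-- The coordinate vector field `∂_{p_θ}`. -/
def dpth : Pt := ![0, 0, 0, 0, 0, 1, 0]

/-- The tortoise radial derivative `∂_{r*} = Ω²·∂_r`, viewed as a vector field. -/
def drstar (M : ℝ) (x : Pt) : Pt := Om2 M x • dr

/-- The geodesic spray `𝕏_g`. -/
def Xg (M : ℝ) (x : Pt) : Pt :=
  (-(ptm M x) / Om2 M x) • dt + (x 4 / Om2 M x) • drstar M x
    + (x 5 / (x 1) ^ 2) • dth + (x 6 / ((x 1) ^ 2 * (Real.sin (x 2)) ^ 2)) • dph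
    + ((x 1 - 3 * M) / (x 1) ^ 4 * (ell x) ^ 2) • dpr
    + (Real.cos (x 2) / ((x 1) ^ 2 * (Real.sin (x 2)) ^ 3) * (x 6) ^ 2) • dpth

/-!
Both brackets reduce to partial derivatives of `𝕏_g`: since `∂_{p_{r*}}` is constant and
`∂_{r*} = Ω² ∂_r`, one has `[𝕏_g, ∂_{p_{r*}}] = -∂_{p_{r*}} 𝕏_g` and
`[𝕏_g, ∂_{r*}] = 𝕏_g(Ω²) ∂_r - Ω² ∂_r 𝕏_g` with `𝕏_g(Ω²) = p_{r*} · 2M/r²`.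
Neither `ℓ` nor `r²` times the angular part of `𝕏_g` depends on `r` or `p_{r*}`, so the only
non-trivial coefficient is `p_t = -(p_{r*}² + ℓ² Ω²/r²)^{1/2}`, with `∂_{p_{r*}} p_t = p_{r*}/p_t`
and `∂_r p_t = -(r - 3M) ℓ² / (r⁴ p_t)`, because the effective potential `Ω²/r²` has derivative
`-2(r - 3M)/r⁴`. What remains are rational identities modulo the mass shell relation
`p_t² = p_{r*}² + Ω² ℓ²/r²`.
-/

lemma lieBracket_const_right (V : Pt → Pt) (w x : Pt) :
    lieBracket V (fun _ => w) x = -fderiv ℝ V x w := by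
  simp [lieBracket]

lemma lieBracket_smul_const_right {f : Pt → ℝ} {f' : Pt →L[ℝ] ℝ} {x : Pt}
    (hf : HasFDerivAt f f' x) (V : Pt → Pt) (w : Pt) :
    lieBracket V (fun y => f y • w) x = f' (V x) • w - f x • fderiv ℝ V x w := by
  simp [lieBracket, (hf.smul_const w).fderiv]

lemma fderiv_single_eq_of_hasDerivAt_update {ι F : Type*} [Fintype ι] [DecidableEq ι]
    [NormedAddCommGroup F] [NormedSpace ℝ F] {V : (ι → ℝ) → F} {x : ι → ℝ} {i : ι} {w : F}
    (hV : DifferentiableAt ℝ V x) (h : HasDerivAt (fun s => V (Function.update x i s)) w (x i)) :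
    fderiv ℝ V x (Pi.single i 1) = w := by
  have hV' : HasFDerivAt V (fderiv ℝ V x) (Function.update x i (x i)) := by
    rw [Function.update_eq_self]; exact hV.hasFDerivAt
  exact (hV'.comp_hasDerivAt (x i) (hasDerivAt_update x i (x i))).unique h

lemma hasDerivAt_neg_sqrt {f : ℝ → ℝ} {f' a P : ℝ} (hf : HasDerivAt f f' a)
    (hP : -√(f a) = P) (hP0 : P ≠ 0) :
    HasDerivAt (fun s => -√(f s)) (f' / (2 * P)) a := by
  have hfa : f a ≠ 0 := by
    rintro h; rw [h, Real.sqrt_zero, neg_zero] at hP; exact hP0 hP.symm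
  refine (hf.sqrt hfa).neg.congr_deriv ?_
  rw [← hP]; ring

lemma dr_eq_single : dr = Pi.single 1 1 := by
  ext i; fin_cases i <;> rfl

lemma dpr_eq_single : dpr = Pi.single 4 1 := by
  ext i; fin_cases i <;> rfl

variable {M r : ℝ} {x : Pt}

lemma hasDerivAt_one_sub_two_mul_div (hr : r ≠ 0) :
    HasDerivAt (fun r => 1 - 2 * M / r) (2 * M / r ^ 2) r := by
  have h := ((hasDerivAt_inv hr).const_mul (2 * M)).const_sub 1
  simp only [← div_eq_mul_inv] at h
  exact h.congr_deriv (by ring)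

lemma hasDerivAt_one_sub_two_mul_div_div_sq (hr : r ≠ 0) :
    HasDerivAt (fun r => (1 - 2 * M / r) / r ^ 2) (-2 * (r - 3 * M) / r ^ 4) r := by
  have h := (hasDerivAt_one_sub_two_mul_div (M := M) hr).div (hasDerivAt_pow 2 r) (by positivity)
  exact h.congr_deriv (by field_simp; ring)

lemma hasFDerivAt_Om2 (hr : x 1 ≠ 0) :
    HasFDerivAt (Om2 M) ((2 * M / x 1 ^ 2) • ContinuousLinearMap.proj (R := ℝ) 1) x :=
  (hasDerivAt_one_sub_two_mul_div hr).comp_hasFDerivAt (f := fun y : Pt => y 1) x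
    (hasFDerivAt_apply 1 x)

lemma r_pos_of_mem_U (hM : 0 ≤ M) (hx : x ∈ U M) : 0 < x 1 := by
  linarith [hx.1]

lemma sin_pos_of_mem_U (hx : x ∈ U M) : 0 < Real.sin (x 2) :=
  Real.sin_pos_of_pos_of_lt_pi hx.2.1 hx.2.2.1

lemma Om2_pos_of_mem_U (hM : 0 ≤ M) (hx : x ∈ U M) : 0 < Om2 M x := by
  have := (div_lt_one (r_pos_of_mem_U hM hx)).2 hx.1
  rw [Om2]; linarith

lemma ell_pos_of_mem_U (hx : x ∈ U M) : 0 < ell x :=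
  Real.sqrt_pos.2 hx.2.2.2

lemma ptm_sq (hM : 0 ≤ M) (hx : x ∈ U M) :
    ptm M x ^ 2 = x 4 ^ 2 + Om2 M x * ell x ^ 2 / x 1 ^ 2 := by
  have := Om2_pos_of_mem_U hM hx
  rw [ptm, neg_sq, Real.sq_sqrt (by positivity)]

lemma ptm_neg (hM : 0 ≤ M) (hx : x ∈ U M) : ptm M x < 0 := by
  have := Om2_pos_of_mem_U hM hx
  have := ell_pos_of_mem_U hx
  have := r_pos_of_mem_U hM hx
  rw [ptm, neg_lt_zero, Real.sqrt_pos]; positivity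

lemma differentiableAt_ell (hx : x ∈ U M) : DifferentiableAt ℝ ell x := by
  have := (sin_pos_of_mem_U hx).ne'
  unfold ell
  fun_prop (disch := first | exact hx.2.2.2.ne' | positivity)

lemma differentiableAt_ptm (hM : 0 ≤ M) (hx : x ∈ U M) : DifferentiableAt ℝ (ptm M) x := by
  have hr := (r_pos_of_mem_U hM hx).ne'
  have := (hasFDerivAt_Om2 (M := M) hr).differentiableAt
  have := differentiableAt_ell hx
  have hq : x 4 ^ 2 + Om2 M x * ell x ^ 2 / x 1 ^ 2 ≠ 0 := by
    rw [← ptm_sq hM hx]; exact pow_ne_zero 2 (ptm_neg hM hx).ne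
  unfold ptm
  fun_prop (disch := first | exact hq | positivity)

lemma differentiableAt_Xg (hM : 0 ≤ M) (hx : x ∈ U M) : DifferentiableAt ℝ (Xg M) x := by
  have hr := (r_pos_of_mem_U hM hx).ne'
  have := (hasFDerivAt_Om2 (M := M) hr).differentiableAt
  have := differentiableAt_ell hx
  have := differentiableAt_ptm hM hx
  have := (Om2_pos_of_mem_U hM hx).ne'
  have := (sin_pos_of_mem_U hx).ne'
  unfold Xg drstar
  fun_prop (disch := first | assumption | positivity)

/-- `r²` times the angular part of `𝕏_g`. -/
def angularSpray (x : Pt) : Pt :=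
  x 5 • dth + (x 6 / Real.sin (x 2) ^ 2) • dph
    + (Real.cos (x 2) / Real.sin (x 2) ^ 3 * x 6 ^ 2) • dpth

lemma Xg_eq_angularSpray (M : ℝ) (y : Pt) :
    Xg M y = (-ptm M y / Om2 M y) • dt + (y 4 / Om2 M y * Om2 M y) • dr
      + (y 1 ^ 2)⁻¹ • angularSpray y + ((y 1 - 3 * M) / y 1 ^ 4 * ell y ^ 2) • dpr := by
  simp only [Xg, drstar, angularSpray, smul_add, smul_smul]
  match_scalars <;> ring

lemma Xg_apply_one (h : Om2 M x ≠ 0) : Xg M x 1 = x 4 := by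
  simp [Xg_eq_angularSpray, angularSpray, dt, dr, dth, dph, dpr, dpth, h]

lemma ptm_update_r (M r : ℝ) (x : Pt) :
    ptm M (Function.update x 1 r) = -√(x 4 ^ 2 + ell x ^ 2 * ((1 - 2 * M / r) / r ^ 2)) := by
  simp only [ptm, Om2, ell, ne_eq, Fin.reduceEq, not_false_eq_true, Function.update_of_ne,
    Function.update_self, neg_inj]
  ring_nf

lemma ptm_update_pr (M p : ℝ) (x : Pt) :
    ptm M (Function.update x 4 p) = -√(p ^ 2 + Om2 M x * ell x ^ 2 / x 1 ^ 2) := by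
  simp [ptm, Om2, ell]

lemma hasDerivAt_ptm_update_r (hM : 0 ≤ M) (hx : x ∈ U M) :
    HasDerivAt (fun r => ptm M (Function.update x 1 r))
      (-(x 1 - 3 * M) * ell x ^ 2 / (x 1 ^ 4 * ptm M x)) (x 1) := by
  have hr := r_pos_of_mem_U hM hx
  simp only [ptm_update_r]
  have h := hasDerivAt_neg_sqrt
    (((hasDerivAt_one_sub_two_mul_div_div_sq (M := M) hr.ne').const_mul (ell x ^ 2)).const_add
      (x 4 ^ 2)) (by simpa using (ptm_update_r M (x 1) x).symm) (ptm_neg hM hx).ne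
  exact h.congr_deriv (by field_simp)

lemma hasDerivAt_ptm_update_pr (hM : 0 ≤ M) (hx : x ∈ U M) :
    HasDerivAt (fun p => ptm M (Function.update x 4 p)) (x 4 / ptm M x) (x 4) := by
  simp only [ptm_update_pr]
  have h := hasDerivAt_neg_sqrt
    ((hasDerivAt_pow 2 (x 4)).add_const (Om2 M x * ell x ^ 2 / x 1 ^ 2))
    (by simpa using (ptm_update_pr M (x 4) x).symm) (ptm_neg hM hx).ne
  exact h.congr_deriv (by field_simp; ring)

lemma hasDerivAt_Xg_update_r (hM : 0 ≤ M) (hx : x ∈ U M) :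
    HasDerivAt (fun r => Xg M (Function.update x 1 r))
      (((x 1 - 3 * M) * ell x ^ 2 / (x 1 ^ 4 * ptm M x * Om2 M x)
          + 2 * M * ptm M x / (x 1 ^ 2 * Om2 M x ^ 2)) • dt
        - (2 / x 1 ^ 3) • angularSpray x + (3 * (4 * M - x 1) / x 1 ^ 5 * ell x ^ 2) • dpr)
      (x 1) := by
  have hr := (r_pos_of_mem_U hM hx).ne'
  have hW : 1 - 2 * M / x 1 ≠ 0 := (Om2_pos_of_mem_U hM hx).ne'
  have hΩ := hasDerivAt_one_sub_two_mul_div (M := M) hr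
  have h := ((((hasDerivAt_ptm_update_r hM hx).neg.div hΩ hW).smul_const dt).add
    ((((hasDerivAt_const (x 1) (x 4)).div hΩ hW).mul hΩ).smul_const dr)).add
    (((hasDerivAt_pow 2 (x 1)).inv (by positivity)).smul_const (angularSpray x)) |>.add
    (((((hasDerivAt_id (x 1)).sub_const (3 * M)).div (hasDerivAt_pow 4 (x 1))
      (by positivity)).mul_const (ell x ^ 2)).smul_const dpr)
  have hfun : (fun r => Xg M (Function.update x 1 r)) = fun r =>
      (-ptm M (Function.update x 1 r) / (1 - 2 * M / r)) • dt
        + (x 4 / (1 - 2 * M / r) * (1 - 2 * M / r)) • dr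
        + (r ^ 2)⁻¹ • angularSpray x + ((r - 3 * M) / r ^ 4 * ell x ^ 2) • dpr := by
    funext r; rw [Xg_eq_angularSpray]; simp [Om2, angularSpray, ell]
  rw [hfun]
  refine h.congr_deriv ?_
  simp only [Pi.neg_apply, Pi.div_apply, id, Function.update_eq_self,
    show 1 - 2 * M / x 1 = Om2 M x from rfl]
  match_scalars <;> field_simp <;> ring

lemma hasDerivAt_Xg_update_pr (hM : 0 ≤ M) (hx : x ∈ U M) :
    HasDerivAt (fun p => Xg M (Function.update x 4 p))
      ((-(x 4 / (Om2 M x * ptm M x))) • dt + dr) (x 4) := by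
  have hW := (Om2_pos_of_mem_U hM hx).ne'
  have h := (((hasDerivAt_ptm_update_pr hM hx).neg.div_const (Om2 M x)).smul_const dt).add
    ((((hasDerivAt_id (x 4)).div_const (Om2 M x)).mul_const (Om2 M x)).smul_const dr)
    |>.add_const ((x 1 ^ 2)⁻¹ • angularSpray x + ((x 1 - 3 * M) / x 1 ^ 4 * ell x ^ 2) • dpr)
  have hfun : (fun p => Xg M (Function.update x 4 p)) = fun p =>
      (-ptm M (Function.update x 4 p) / Om2 M x) • dt + (p / Om2 M x * Om2 M x) • dr
        + ((x 1 ^ 2)⁻¹ • angularSpray x + ((x 1 - 3 * M) / x 1 ^ 4 * ell x ^ 2) • dpr) := by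
    funext p; rw [Xg_eq_angularSpray]; simp [Om2, angularSpray, ell, add_assoc]
  rw [hfun]
  refine h.congr_deriv ?_
  match_scalars <;> field_simp

lemma lieBracket_Xg_drstar (hM : 0 ≤ M) (hx : x ∈ U M) :
    lieBracket (Xg M) (drstar M) x
      = ((x 1 - 3 * M) * ptm M x / ((x 1) ^ 2 * Om2 M x)
          + (x 1 - 3 * M) * (x 4) ^ 2 / ((x 1) ^ 2 * Om2 M x * ptm M x)) • dt
        - (2 * ((x 1 - 3 * M) / ((x 1) ^ 2 * Om2 M x)) * x 4) • drstar M x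
        + (Om2 M x * ((x 1 - 6 * M) / (x 1) ^ 5) * (ell x) ^ 2) • dpr
        + (2 * Om2 M x / x 1) • Xg M x := by
  have hr := (r_pos_of_mem_U hM hx).ne'
  have hW := (Om2_pos_of_mem_U hM hx).ne'
  have hp := (ptm_neg hM hx).ne
  have h_r := fderiv_single_eq_of_hasDerivAt_update (differentiableAt_Xg hM hx)
    (hasDerivAt_Xg_update_r hM hx)
  have hsq : ptm M x ^ 2 * x 1 ^ 2 = x 4 ^ 2 * x 1 ^ 2 + Om2 M x * ell x ^ 2 := by
    rw [ptm_sq hM hx]; field_simp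
  have hΩ : Om2 M x * x 1 = x 1 - 2 * M := by rw [Om2]; field_simp
  rw [show drstar M = fun y => Om2 M y • dr from rfl,
    lieBracket_smul_const_right (hasFDerivAt_Om2 hr), dr_eq_single, h_r, ← dr_eq_single]
  simp only [FunLike.coe_smul, Pi.smul_apply, ContinuousLinearMap.proj_apply, Xg_apply_one hW,
    smul_eq_mul]
  rw [Xg_eq_angularSpray]
  match_scalars
  · field_simp; linear_combination -x 4 * hΩ
  · field_simp; linear_combination (x 1 - 3 * M) * hsq + 2 * x 1 ^ 2 * ptm M x ^ 2 * hΩ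
  · field_simp
  · field_simp; ring

lemma lieBracket_Xg_dpr (hM : 0 ≤ M) (hx : x ∈ U M) :
    lieBracket (Xg M) (fun _ => dpr) x
      = (x 4 / (Om2 M x * ptm M x)) • dt - (1 / Om2 M x) • drstar M x := by
  have hW := (Om2_pos_of_mem_U hM hx).ne'
  have h_pr := fderiv_single_eq_of_hasDerivAt_update (differentiableAt_Xg hM hx)
    (hasDerivAt_Xg_update_pr hM hx)
  rw [lieBracket_const_right, dpr_eq_single, h_pr, drstar]
  match_scalars <;> field_simp

/-- the Lie bracket identities for `[𝕏_g, ∂_{r*}]` and `[𝕏_g, ∂_{p_{r*}}]`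
on the null-shell chart. -/
theorem bracket_Xg_drstar_dpr (M : ℝ) (hM : 0 < M) (x : Pt) (hx : x ∈ U M) :
    lieBracket (Xg M) (drstar M) x
      = ((x 1 - 3 * M) * ptm M x / ((x 1) ^ 2 * Om2 M x)
          + (x 1 - 3 * M) * (x 4) ^ 2 / ((x 1) ^ 2 * Om2 M x * ptm M x)) • dt
        - (2 * ((x 1 - 3 * M) / ((x 1) ^ 2 * Om2 M x)) * x 4) • drstar M x
        + (Om2 M x * ((x 1 - 6 * M) / (x 1) ^ 5) * (ell x) ^ 2) • dpr
        + (2 * Om2 M x / x 1) • Xg M x ∧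
    lieBracket (Xg M) (fun _ => dpr) x
      = (x 4 / (Om2 M x * ptm M x)) • dt - (1 / Om2 M x) • drstar M x :=
  ⟨lieBracket_Xg_drstar hM.le hx, lieBracket_Xg_dpr hM.le hx⟩

end SchwVlasov
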